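/- Let p be a prime and for k ≥ 0 let a_p(k) denote the number of orbits of the right-multiplication action of SL(2, ℤ/pℤ) on k×2 matrices over ℤ/pℤ, and set F(n) = a_p(n+1) − a_p(n). Then F satisfies the recursion F(n) = p·F(n−1) + p^{2n−2}(p − 1) for all n ≥ 1, with initial value F(0) = 1; equivalently, a_p(n+1) − a_p(n) = p·(a_p(n) − a_p(n−1)) + p^{2n−2}(p−1) for n ≥ 1. -/

import Mathlib

/-!
Count orbits with Burnside's lemma. A matrix is fixed by `A ∈ SL(2, q)` exactly when each of
its `k` rows is a fixed row vector of `A`, so `A` fixes `q ^ (k d)` matrices, where `d` is the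
dimension of the fixed space of `A`: `d = 2` for `A = 1`, `d = 1` for the `q² - 1` other matrices
of trace `2`, and `d = 0` for the remaining `q³ - q² - q` elements. Hence
`a(k) (q³ - q) = q^(2k) + (q² - 1) q^k + q³ - q² - q`, and subtracting consecutive values gives
the closed form `q F(n) = q^(2n) + q^(n+1) - q^n`, from which the recursion is immediate.
-/

/-- The orbit relation of the right-multiplication action of `SL(2, ℤ/pℤ)`
on `k × 2` matrices over `ℤ/pℤ`. -/
def slOrbRel (p k : ℕ) :
    Matrix (Fin k) (Fin 2) (ZMod p) → Matrix (Fin k) (Fin 2) (ZMod p) → Prop :=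
  fun M N => ∃ A : Matrix.SpecialLinearGroup (Fin 2) (ZMod p),
    M * (A : Matrix (Fin 2) (Fin 2) (ZMod p)) = N

/-- `a_p(k)`: the number of orbits of `SL(2, ℤ/pℤ)` on `k × 2` matrices over `ℤ/pℤ`. -/
noncomputable def slOrbCount (p k : ℕ) : ℕ := Nat.card (Quot (slOrbRel p k))

/-- `F(n) = a_p(n+1) - a_p(n)`. -/
noncomputable def slOrbDiff (p n : ℕ) : ℤ := (slOrbCount p (n + 1) : ℤ) - slOrbCount p n

open Matrix MulAction
open scoped MatrixGroups

theorem natCard_subtype_prod_eq_sum {α β : Type*} [Fintype α] [Finite β] (P : α → β → Prop) :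
    Nat.card {x : α × β // P x.1 x.2} = ∑ a, Nat.card {b // P a b} := by
  rw [Nat.card_congr (Equiv.subtypeProdEquivSigmaSubtype P), Nat.card_sigma]

theorem MulAction.sum_natCard_fixedBy_op_eq_card_orbits_mul_card (G X : Type*) [Group G]
    [Fintype G] [MulAction Gᵐᵒᵖ X] [Finite X] :
    ∑ g : G, Nat.card (fixedBy X (MulOpposite.op g)) =
      Nat.card (orbitRel.Quotient Gᵐᵒᵖ X) * Nat.card G := by
  classical
  let _ : Fintype X := Fintype.ofFinite X
  let _ : Fintype Gᵐᵒᵖ := Fintype.ofEquiv G MulOpposite.opEquiv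
  have h := sum_card_fixedBy_eq_card_orbits_mul_card_group Gᵐᵒᵖ X
  rw [← Fintype.card_congr (MulOpposite.opEquiv (α := G)),
    ← Fintype.sum_equiv MulOpposite.opEquiv _ _ (fun _ => rfl)] at h
  simp only [Nat.card_eq_fintype_card]
  exact h

section FiniteField

variable {K : Type*} [Field K] [Fintype K] [DecidableEq K]

theorem natCard_mul_eq (s : K) :
    (Nat.card {x : K × K // x.1 * x.2 = s} : ℤ) =
      Fintype.card K - 1 + if s = 0 then (Fintype.card K : ℤ) else 0 := by
  have hfiber : ∀ a : K, (Nat.card {b // a * b = s} : ℤ) =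
      1 + if a = 0 then (if s = 0 then (Fintype.card K : ℤ) else 0) - 1 else 0 := by
    intro a
    by_cases ha : a = 0
    · by_cases hs : s = 0 <;> simp [ha, hs, eq_comm (a := (0 : K)), Nat.card_eq_fintype_card]
    · rw [if_neg ha, Nat.card_congr
        (Equiv.subtypeEquivRight fun b => (eq_inv_mul_iff_mul_eq₀ ha).symm)]
      simp
  rw [natCard_subtype_prod_eq_sum (fun a b => a * b = s), Nat.cast_sum]
  simp only [hfiber, Finset.sum_add_distrib, Finset.sum_ite_eq', Finset.mem_univ, if_true,
    Finset.sum_const, Finset.card_univ, nsmul_eq_mul, mul_one]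
  ring

theorem sum_natCard_mul_eq {α : Type*} [Fintype α] (f : α → K) :
    ∑ a, (Nat.card {x : K × K // x.1 * x.2 = f a} : ℤ) =
      Fintype.card α * (Fintype.card K - 1) + Fintype.card K * Nat.card {a // f a = 0} := by
  simp only [natCard_mul_eq]
  simp only [Finset.sum_add_distrib, Finset.sum_const, Finset.card_univ, nsmul_eq_mul,
    Finset.sum_ite, Nat.card_eq_fintype_card, Fintype.card_subtype]
  ring

end FiniteField

namespace Matrix

variable {K : Type*} [Field K]

theorem det_sub_one_fin_two (A : Matrix (Fin 2) (Fin 2) K) :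
    (A - 1).det = A.det - A.trace + 1 := by
  simp [det_fin_two, trace_fin_two]
  ring

theorem finrank_ker_vecMulLinear_fin_two [DecidableEq K] (B : Matrix (Fin 2) (Fin 2) K) :
    Module.finrank K (LinearMap.ker B.vecMulLinear) =
      if B = 0 then 2 else if B.det = 0 then 1 else 0 := by
  have hle : Module.finrank K (LinearMap.ker B.vecMulLinear) ≤ 2 := by
    simpa using Submodule.finrank_le (LinearMap.ker B.vecMulLinear)
  split_ifs with h0 hdet
  · subst h0
    rw [show (0 : Matrix (Fin 2) (Fin 2) K).vecMulLinear = 0 from LinearMap.ext fun v => by simp,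
      LinearMap.ker_zero, finrank_top]
    simp
  · have hne0 : Module.finrank K (LinearMap.ker B.vecMulLinear) ≠ 0 := by
      obtain ⟨v, hv0, hv⟩ := exists_vecMul_eq_zero_iff.2 hdet
      rw [ne_eq, Submodule.finrank_eq_zero, ← ne_eq, Submodule.ne_bot_iff]
      exact ⟨v, hv, hv0⟩
    have hne2 : Module.finrank K (LinearMap.ker B.vecMulLinear) ≠ 2 := by
      intro h2
      have htop := Submodule.eq_top_of_finrank_eq (h2.trans (by simp))
      refine h0 (ext fun i j => ?_)
      have hi : Pi.single i 1 ∈ LinearMap.ker B.vecMulLinear := htop ▸ Submodule.mem_top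
      simpa using congrFun hi j
    omega
  · rw [Submodule.finrank_eq_zero, Submodule.eq_bot_iff]
    intro v hv
    by_contra hv0
    exact hdet (exists_vecMul_eq_zero_iff.1 ⟨v, hv0, hv⟩)

namespace SpecialLinearGroup

section RightAction

variable {m n R : Type*} [Fintype n] [DecidableEq n] [CommRing R]

instance : MulAction (SpecialLinearGroup n R)ᵐᵒᵖ (Matrix m n R) where
  smul A M := M * (A.unop : Matrix n n R)
  one_smul M := Matrix.mul_one M
  mul_smul _ _ M := (Matrix.mul_assoc M _ _).symm

theorem op_smul_eq_mul (A : SpecialLinearGroup n R) (M : Matrix m n R) :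
    MulOpposite.op A • M = M * (A : Matrix n n R) := rfl

def fixedByOpEquiv (A : SpecialLinearGroup n R) :
    fixedBy (Matrix m n R) (MulOpposite.op A) ≃ (m → {v : n → R // v ᵥ* A = v}) :=
  (Equiv.subtypeEquivRight fun M => by
    simp only [mem_fixedBy, op_smul_eq_mul, ← Matrix.ext_iff, mul_apply_eq_vecMul,
      funext_iff]).trans Equiv.subtypePiEquivPi

theorem natCard_fixedBy_op [Fintype m] (A : SpecialLinearGroup n R) :
    Nat.card (fixedBy (Matrix m n R) (MulOpposite.op A)) =
      Nat.card {v : n → R // v ᵥ* A = v} ^ Fintype.card m := by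
  rw [Nat.card_congr (fixedByOpEquiv A), Nat.card_fun, Nat.card_eq_fintype_card (α := m)]

end RightAction

local notation:1024 "↑ₘ" A:1024 => ((A : SL(2, K)) : Matrix (Fin 2) (Fin 2) K)

section Counting

variable [Fintype K] [DecidableEq K]

theorem natCard_vecMul_eq_self_fin_two (A : SL(2, K)) :
    Nat.card {v : Fin 2 → K // v ᵥ* ↑ₘA = v} =
      Fintype.card K ^ (if A = 1 then 2 else if trace ↑ₘA = 2 then 1 else 0) := by
  have hker : ∀ v : Fin 2 → K, v ᵥ* ↑ₘA = v ↔ v ∈ LinearMap.ker (↑ₘA - 1).vecMulLinear := by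
    intro v
    rw [LinearMap.mem_ker, vecMulLinear_apply, vecMul_sub, vecMul_one, sub_eq_zero]
  have hone : ↑ₘA - 1 = 0 ↔ A = 1 := by
    rw [sub_eq_zero, ← coe_one]
    exact Subtype.ext_iff.symm
  have htrace : (↑ₘA - 1).det = 0 ↔ trace ↑ₘA = 2 := by
    rw [det_sub_one_fin_two, det_coe, sub_add_eq_add_sub, sub_eq_zero, eq_comm]
    norm_num
  rw [Nat.card_congr (Equiv.subtypeEquivRight hker), Module.natCard_eq_pow_finrank (K := K),
    finrank_ker_vecMulLinear_fin_two, Nat.card_eq_fintype_card]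
  simp only [hone, htrace]

/-- `!![a, b; c, d] ↦ ((a, d), (b, c))`. -/
def finTwoEquiv : SL(2, K) ≃ {x : (K × K) × (K × K) // x.2.1 * x.2.2 = x.1.1 * x.1.2 - 1} where
  toFun A := ⟨((A 0 0, A 1 1), (A 0 1, A 1 0)), by
    linear_combination -(det_fin_two ↑ₘA).symm.trans A.2⟩
  invFun x := ⟨!![x.1.1.1, x.1.2.1; x.1.2.2, x.1.1.2], by
    rw [det_fin_two_of]; linear_combination -x.2⟩
  left_inv A := Subtype.ext (eta_fin_two ↑ₘA).symm
  right_inv x := by simp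

/-- `!![a, b; c, 2 - a] ↦ (a, (b, c))`. -/
def traceEqTwoEquiv :
    {A : SL(2, K) // trace ↑ₘA = 2} ≃ {x : K × (K × K) // x.2.1 * x.2.2 = -(x.1 - 1) ^ 2} where
  toFun A := ⟨(A.1 0 0, (A.1 0 1, A.1 1 0)), by
    have hdet := (det_fin_two ↑ₘA.1).symm.trans A.1.2
    have htr := (trace_fin_two ↑ₘA.1).symm.trans A.2
    linear_combination A.1 0 0 * htr - hdet⟩
  invFun x := ⟨⟨!![x.1.1, x.1.2.1; x.1.2.2, 2 - x.1.1], by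
      rw [det_fin_two_of]; linear_combination -x.2⟩, by
      rw [trace_fin_two_of]; ring⟩
  left_inv A := by
    have htr := (trace_fin_two ↑ₘA.1).symm.trans A.2
    refine Subtype.ext (Subtype.ext ?_)
    change !![A.1 0 0, A.1 0 1; A.1 1 0, 2 - A.1 0 0] = A.1.1
    rw [← eq_sub_of_add_eq' htr]
    exact (eta_fin_two ↑ₘA.1).symm
  right_inv x := by simp

theorem natCard_fin_two : (Nat.card SL(2, K) : ℤ) = Fintype.card K ^ 3 - Fintype.card K := by
  have hunits : (Nat.card {x : K × K // x.1 * x.2 - 1 = 0} : ℤ) = Fintype.card K - 1 := by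
    rw [Nat.card_congr (Equiv.subtypeEquivRight fun x : K × K => sub_eq_zero), natCard_mul_eq,
      if_neg one_ne_zero, add_zero]
  rw [Nat.card_congr finTwoEquiv,
    natCard_subtype_prod_eq_sum (fun ad bc : K × K => bc.1 * bc.2 = ad.1 * ad.2 - 1), Nat.cast_sum,
    sum_natCard_mul_eq, hunits, Fintype.card_prod]
  push_cast
  ring

theorem natCard_trace_eq_two :
    (Nat.card {A : SL(2, K) // trace ↑ₘA = 2} : ℤ) = Fintype.card K ^ 2 := by
  have hone : Nat.card {a : K // -(a - 1) ^ 2 = 0} = 1 := by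
    simp [sub_eq_zero]
  rw [Nat.card_congr traceEqTwoEquiv,
    natCard_subtype_prod_eq_sum (fun (a : K) (bc : K × K) => bc.1 * bc.2 = -(a - 1) ^ 2),
    Nat.cast_sum, sum_natCard_mul_eq, hone]
  push_cast
  ring

theorem natCard_orbitRel_quotient_mul (k : ℕ) :
    (Nat.card (orbitRel.Quotient SL(2, K)ᵐᵒᵖ (Matrix (Fin k) (Fin 2) K)) : ℤ) *
        (Fintype.card K ^ 3 - Fintype.card K) =
      Fintype.card K ^ (2 * k) + (Fintype.card K ^ 2 - 1) * Fintype.card K ^ k +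
        Fintype.card K ^ 3 - Fintype.card K ^ 2 - Fintype.card K := by
  set q : ℤ := (Fintype.card K : ℤ)
  have hweight : ∀ A : SL(2, K),
      (Nat.card (fixedBy (Matrix (Fin k) (Fin 2) K) (MulOpposite.op A)) : ℤ) =
        1 + (if trace ↑ₘA = 2 then q ^ k - 1 else 0) +
          if A = 1 then q ^ (2 * k) - q ^ k else 0 := by
    intro A
    rw [natCard_fixedBy_op, natCard_vecMul_eq_self_fin_two, Fintype.card_fin]
    by_cases h1 : A = 1
    · subst h1
      simp [pow_mul, q]
    · by_cases h2 : trace ↑ₘA = 2 <;> simp [h1, h2, q]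
  have htrace : ∑ A : SL(2, K), (if trace ↑ₘA = 2 then q ^ k - 1 else 0) = q ^ 2 * (q ^ k - 1) := by
    rw [Finset.sum_ite, Finset.sum_const_zero, add_zero, Finset.sum_const, nsmul_eq_mul,
      ← Fintype.card_subtype, ← Nat.card_eq_fintype_card, natCard_trace_eq_two]
  have hburnside := congrArg (Nat.cast (R := ℤ))
    (sum_natCard_fixedBy_op_eq_card_orbits_mul_card SL(2, K) (Matrix (Fin k) (Fin 2) K))
  simp only [Nat.cast_sum, hweight, Finset.sum_add_distrib, htrace, Finset.sum_ite_eq',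
    Finset.mem_univ, if_true, Finset.sum_const, Finset.card_univ, nsmul_eq_mul, mul_one,
    ← Nat.card_eq_fintype_card (α := SL(2, K)), Nat.cast_mul, natCard_fin_two] at hburnside
  linear_combination -hburnside

end Counting

end SpecialLinearGroup

end Matrix

theorem slOrbCount_eq_natCard_orbitRel_quotient (p k : ℕ) :
    slOrbCount p k =
      Nat.card (orbitRel.Quotient SL(2, ZMod p)ᵐᵒᵖ (Matrix (Fin k) (Fin 2) (ZMod p))) := by
  refine Nat.card_congr (Quot.congr (Equiv.refl _) fun M N => ?_)
  rw [Equiv.refl_apply, Equiv.refl_apply, orbitRel_apply, mem_orbit_symm, mem_orbit_iff,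
    MulOpposite.op_surjective.exists]
  rfl

theorem slOrbDiff_mul_eq (p n : ℕ) [Fact p.Prime] :
    slOrbDiff p n * p = (p : ℤ) ^ (2 * n) + (p : ℤ) ^ (n + 1) - (p : ℤ) ^ n := by
  have hcount := fun k => slOrbCount_eq_natCard_orbitRel_quotient p k ▸
    SpecialLinearGroup.natCard_orbitRel_quotient_mul (K := ZMod p) k
  simp only [ZMod.card] at hcount
  have hp : (2 : ℤ) ≤ p := by exact_mod_cast (Fact.out : p.Prime).two_le
  have hcard : (p : ℤ) ^ 3 - p ≠ 0 := by
    have : (0 : ℤ) < p * (p ^ 2 - 1) := mul_pos (by omega) (by nlinarith)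
    linarith
  refine mul_right_cancel₀ hcard ?_
  unfold slOrbDiff
  linear_combination (p : ℤ) * (hcount (n + 1) - hcount n)

theorem orbit_count_difference_recursion (p : ℕ) [Fact p.Prime] :
    slOrbDiff p 0 = 1 ∧
      ∀ n : ℕ, 1 ≤ n →
        slOrbDiff p n = (p : ℤ) * slOrbDiff p (n - 1) +
          (p : ℤ) ^ (2 * n - 2) * ((p : ℤ) - 1) := by
  have hp : (p : ℤ) ≠ 0 := by exact_mod_cast (Fact.out : p.Prime).ne_zero
  refine ⟨mul_right_cancel₀ hp ?_, fun n hn => ?_⟩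
  · linear_combination slOrbDiff_mul_eq p 0
  · obtain ⟨m, rfl⟩ := Nat.exists_eq_add_of_le' hn
    rw [show 2 * (m + 1) - 2 = 2 * m by omega, Nat.add_sub_cancel]
    refine mul_right_cancel₀ hp ?_
    linear_combination slOrbDiff_mul_eq p (m + 1) - (p : ℤ) * slOrbDiff_mul_eq p m
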